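/- arXiv:0903.1160 — 8 statements merged into one kernel-verified Lean document; each statement's English description precedes it below -/
import Mathlib

section
/- If a function f : X → Y between real vector spaces satisfies f(2x+y) + f(2x−y) = 4[f(x+y) + f(x−y)] + 2[f(2x) − 4f(x)] − 6f(y) for all x, y ∈ X, then the map g defined by g(x) = f(2x) − 16f(x) is quadratic, i.e., g(x+y) + g(x−y) = 2g(x) + 2g(y) for all x, y ∈ X. -/
/-!
Putting `x = y = 0` and then `x = 0` in the equation shows `f 0 = 0` and that `f` is even.
Evenness lets us read the equation with the roles of `x` and `y` exchanged, which expresses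
`f (x + 2y) + f (x - 2y)` through `f (x ± y)`, `f (2y)`, `f y` and `f x`. Adding the equation at
`(x, 2y)` to four times this one eliminates the quartic part: every `f (2 • _)` term combines
with `16 • f _` into a value of `g`, and what remains is the quadratic equation for `g`.
-/

namespace QuadraticQuarticEquation

variable {X Y : Type*} [AddCommGroup X] [Module ℝ X] [AddCommGroup Y] [Module ℝ Y]
  {f : X → Y}
  (hf : ∀ x y : X, f ((2:ℝ) • x + y) + f ((2:ℝ) • x - y) =
    (4:ℝ) • (f (x + y) + f (x - y)) + (2:ℝ) • (f ((2:ℝ) • x) - (4:ℝ) • f x) - (6:ℝ) • f y)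
include hf

theorem map_zero : f 0 = 0 := by
  have h := hf 0 0
  simp only [smul_zero, add_zero, sub_zero] at h
  have h6 : (6:ℝ) • f 0 = 0 := by linear_combination (norm := module) h
  exact (smul_eq_zero.mp h6).resolve_left (by norm_num)

theorem map_neg (y : X) : f (-y) = f y := by
  have h := hf 0 y
  simp only [smul_zero, zero_add, zero_sub, map_zero hf] at h
  exact smul_right_injective Y (by norm_num : (3:ℝ) ≠ 0) <| by
    linear_combination (norm := module) -h

theorem map_add_two_smul_add_map_sub_two_smul (x y : X) :
    f (x + (2:ℝ) • y) + f (x - (2:ℝ) • y) =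
      (4:ℝ) • (f (x + y) + f (x - y)) + (2:ℝ) • (f ((2:ℝ) • y) - (4:ℝ) • f y) - (6:ℝ) • f x := by
  have h := hf y x
  rwa [add_comm _ x, add_comm y x, ← map_neg hf (y - x), ← map_neg hf ((2:ℝ) • y - x), neg_sub,
    neg_sub] at h

end QuadraticQuarticEquation

theorem stmt_2 {X Y : Type*} [AddCommGroup X] [Module ℝ X] [AddCommGroup Y] [Module ℝ Y]
    (f : X → Y)
    (hf : ∀ x y : X, f ((2:ℝ) • x + y) + f ((2:ℝ) • x - y) =
      (4:ℝ) • (f (x + y) + f (x - y)) + (2:ℝ) • (f ((2:ℝ) • x) - (4:ℝ) • f x) - (6:ℝ) • f y)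
    (g : X → Y) (hg : ∀ x : X, g x = f ((2:ℝ) • x) - (16:ℝ) • f x) :
    ∀ x y : X, g (x + y) + g (x - y) = (2:ℝ) • g x + (2:ℝ) • g y := by
  intro x y
  simp only [hg, smul_add, smul_sub]
  linear_combination (norm := module)
    hf x ((2:ℝ) • y) + (4:ℝ) • QuadraticQuarticEquation.map_add_two_smul_add_map_sub_two_smul hf x y
end

section
/- If a function f : X → Y between real vector spaces satisfies f(2x+y) + f(2x−y) = 4[f(x+y) + f(x−y)] + 2[f(2x) − 4f(x)] − 6f(y) for all x, y ∈ X, then the map h defined by h(x) = f(2x) − 4f(x) satisfies the quartic functional equation h(x+2y) + h(x−2y) = 4[h(x+y) + h(x−y) + 6h(y)] − 6h(x) for all x, y ∈ X. -/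
/-!
On polynomial maps the equation splits into its quadratic and quartic parts, and
`x ↦ f (2 • x) - 4 • f x` kills the quadratic part. Combining the equation at `(a, b)`,
`(a, 2 • b)` and `(b, 2 • a)` gives
`f (a + 2 • b) + f (a - 2 • b) = 4 • (f (a + b) + f (a - b)) + 2 • h b - 6 • f a`;
applying this at `(2 • a, 2 • b)` and subtracting four times its instance at `(a, b)` yields the
quartic equation for `h`, given the quartic scaling `h (2 • b) = 16 • h b`, which follows from
the equation at `(b, b)` and `(b, 2 • b)`.
-/

section

variable {X Y : Type*} [AddCommGroup X] [Module ℝ X] [AddCommGroup Y] [Module ℝ Y]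

def MixedQuadraticQuartic (f : X → Y) : Prop :=
  ∀ x y : X, f ((2:ℝ) • x + y) + f ((2:ℝ) • x - y) =
    (4:ℝ) • (f (x + y) + f (x - y)) + (2:ℝ) • (f ((2:ℝ) • x) - (4:ℝ) • f x) - (6:ℝ) • f y

def doublingDefect (f : X → Y) (x : X) : Y := f ((2:ℝ) • x) - (4:ℝ) • f x

namespace MixedQuadraticQuartic

variable {f : X → Y}

theorem map_zero (hf : MixedQuadraticQuartic f) : f 0 = 0 := by
  have e := hf 0 0
  simp only [smul_zero, add_zero, sub_zero] at e
  linear_combination (norm := module) (1/6:ℝ) • e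

theorem map_neg (hf : MixedQuadraticQuartic f) (z : X) : f (-z) = f z := by
  have e := hf 0 z
  simp only [smul_zero, zero_add, zero_sub] at e
  linear_combination (norm := module) (-(1/3:ℝ)) • e + (2:ℝ) • hf.map_zero

theorem map_three_smul (hf : MixedQuadraticQuartic f) (z : X) :
    f ((3:ℝ) • z) = (6:ℝ) • f ((2:ℝ) • z) - (15:ℝ) • f z := by
  have e := hf z z
  rw [show (2:ℝ) • z + z = (3:ℝ) • z by module, show (2:ℝ) • z - z = z by module,
    show z + z = (2:ℝ) • z by module, sub_self] at e
  linear_combination (norm := module) e + (4:ℝ) • hf.map_zero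

theorem doublingDefect_two_smul (hf : MixedQuadraticQuartic f) (z : X) :
    doublingDefect f ((2:ℝ) • z) = (16:ℝ) • doublingDefect f z := by
  have e := hf z ((2:ℝ) • z)
  rw [show (2:ℝ) • z + (2:ℝ) • z = (2:ℝ) • (2:ℝ) • z by module, sub_self,
    show z + (2:ℝ) • z = (3:ℝ) • z by module, show z - (2:ℝ) • z = -z by module,
    hf.map_neg] at e
  unfold doublingDefect
  linear_combination (norm := module) e + (4:ℝ) • hf.map_three_smul z - hf.map_zero

theorem map_add_two_smul_add_map_sub_two_smul (hf : MixedQuadraticQuartic f) (a b : X) :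
    f (a + (2:ℝ) • b) + f (a - (2:ℝ) • b) =
      (4:ℝ) • (f (a + b) + f (a - b)) + (2:ℝ) • doublingDefect f b - (6:ℝ) • f a := by
  have h1 := hf a b
  have h2 := hf a ((2:ℝ) • b)
  have h3 := hf b ((2:ℝ) • a)
  rw [show (2:ℝ) • b + (2:ℝ) • a = (2:ℝ) • a + (2:ℝ) • b by module,
    show (2:ℝ) • b - (2:ℝ) • a = -((2:ℝ) • a - (2:ℝ) • b) by module, hf.map_neg,
    show b + (2:ℝ) • a = (2:ℝ) • a + b by module,
    show b - (2:ℝ) • a = -((2:ℝ) • a - b) by module, hf.map_neg] at h3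
  unfold doublingDefect
  linear_combination (norm := module) (1/4:ℝ) • ((4:ℝ) • h1 - h2 + h3)

theorem doublingDefect_quartic (hf : MixedQuadraticQuartic f) (x y : X) :
    doublingDefect f (x + (2:ℝ) • y) + doublingDefect f (x - (2:ℝ) • y) =
      (4:ℝ) • (doublingDefect f (x + y) + doublingDefect f (x - y) +
        (6:ℝ) • doublingDefect f y) - (6:ℝ) • doublingDefect f x := by
  have doubled := hf.map_add_two_smul_add_map_sub_two_smul ((2:ℝ) • x) ((2:ℝ) • y)
  simp only [← smul_add, ← smul_sub] at doubled
  have two := hf.doublingDefect_two_smul y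
  have la := hf.map_add_two_smul_add_map_sub_two_smul x y
  unfold doublingDefect at doubled two la ⊢
  linear_combination (norm := module) doubled - (4:ℝ) • la + (2:ℝ) • two

end MixedQuadraticQuartic

end

theorem stmt_4 {X Y : Type*} [AddCommGroup X] [Module ℝ X] [AddCommGroup Y] [Module ℝ Y]
    (f : X → Y)
    (hf : ∀ x y : X, f ((2:ℝ) • x + y) + f ((2:ℝ) • x - y) =
      (4:ℝ) • (f (x + y) + f (x - y)) + (2:ℝ) • (f ((2:ℝ) • x) - (4:ℝ) • f x) - (6:ℝ) • f y)
    (h : X → Y) (hh : ∀ x : X, h x = f ((2:ℝ) • x) - (4:ℝ) • f x) :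
    ∀ x y : X, h (x + (2:ℝ) • y) + h (x - (2:ℝ) • y) =
      (4:ℝ) • (h (x + y) + h (x - y) + (6:ℝ) • h y) - (6:ℝ) • h x := by
  obtain rfl : h = doublingDefect f := funext hh
  exact MixedQuadraticQuartic.doublingDefect_quartic hf
end

section
/- If a function f : X → Y between real vector spaces satisfies f(2x+y) + f(2x−y) = 4[f(x+y) + f(x−y)] + 2[f(2x) − 4f(x)] − 6f(y) for all x, y ∈ X, then 12·f(x) = h(x) − g(x) for all x ∈ X, where g(x) = f(2x) − 16f(x) and h(x) = f(2x) − 4f(x); in particular f(x) = (1/12)h(x) − (1/12)g(x) with g quadratic and h quartic. -/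
/-!
Setting `x = 0` in the equation gives `f 0 = 0` and `f` even, so the equation may also be read
with `x` and `y` swapped. Adding the equation at `(x, 2y)` to four times the swapped one gives
`f(2(x+y)) + f(2(x-y)) = 16 f(x+y) + 16 f(x-y) + 2 f(2x) - 32 f(x) + 2 f(2y) - 32 f(y)`,
which is the quadratic equation for `g`. The same identity at `(x, 2y)`, with `f(4y)` eliminated
through the equation at `(y, 2y)`, yields the quartic equation for `h`. Finally `12 f = h - g`
holds identically.
-/

section

variable (𝕜 : Type*) {X Y : Type*} [Field 𝕜] [AddCommGroup X] [Module 𝕜 X] [AddCommGroup Y]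
  [Module 𝕜 Y]

def IsQuadraticFunctional (g : X → Y) : Prop :=
  ∀ x y : X, g (x + y) + g (x - y) = (2:𝕜) • g x + (2:𝕜) • g y

def IsQuarticFunctional (h : X → Y) : Prop :=
  ∀ x y : X, h (x + (2:𝕜) • y) + h (x - (2:𝕜) • y) =
    (4:𝕜) • (h (x + y) + h (x - y) + (6:𝕜) • h y) - (6:𝕜) • h x

def IsQuadraticQuarticFunctional (f : X → Y) : Prop :=
  ∀ x y : X, f ((2:𝕜) • x + y) + f ((2:𝕜) • x - y) =
    (4:𝕜) • (f (x + y) + f (x - y)) + (2:𝕜) • (f ((2:𝕜) • x) - (4:𝕜) • f x) - (6:𝕜) • f y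

end

namespace IsQuadraticQuarticFunctional

variable {𝕜 X Y : Type*} [Field 𝕜] [CharZero 𝕜]
  [AddCommGroup X] [Module 𝕜 X] [AddCommGroup Y] [Module 𝕜 Y] {f : X → Y}

theorem map_zero (hf : IsQuadraticQuarticFunctional 𝕜 f) : f 0 = 0 := by
  have e := hf 0 0
  simp only [smul_zero, add_zero, sub_zero] at e
  have : (6:𝕜) • f 0 = 0 := by linear_combination (norm := module) e
  exact (smul_eq_zero.mp this).resolve_left (by norm_num)

theorem map_neg (hf : IsQuadraticQuarticFunctional 𝕜 f) (y : X) : f (-y) = f y := by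
  have e := hf 0 y
  simp only [smul_zero, zero_add, zero_sub, hf.map_zero] at e
  refine smul_right_injective Y (show (3:𝕜) ≠ 0 by norm_num) ?_
  linear_combination (norm := module) -e

theorem map_add_two_smul_add_map_sub_two_smul (hf : IsQuadraticQuarticFunctional 𝕜 f)
    (x y : X) :
    f (x + (2:𝕜) • y) + f (x - (2:𝕜) • y) =
      (4:𝕜) • f (x + y) + (4:𝕜) • f (x - y) + (2:𝕜) • f ((2:𝕜) • y)
        - (8:𝕜) • f y - (6:𝕜) • f x := by
  have e := hf y x
  rw [← hf.map_neg ((2:𝕜) • y - x), ← hf.map_neg (y - x), neg_sub, neg_sub,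
    add_comm _ x, add_comm y x] at e
  linear_combination (norm := module) e

theorem map_three_smul (hf : IsQuadraticQuarticFunctional 𝕜 f) (y : X) :
    f ((3:𝕜) • y) = (6:𝕜) • f ((2:𝕜) • y) - (15:𝕜) • f y := by
  have e := hf y y
  rw [show (2:𝕜) • y + y = (3:𝕜) • y by module, show (2:𝕜) • y - y = y by module,
    show y + y = (2:𝕜) • y by module, sub_self, hf.map_zero] at e
  linear_combination (norm := module) e

theorem map_four_smul (hf : IsQuadraticQuarticFunctional 𝕜 f) (y : X) :
    f ((4:𝕜) • y) = (20:𝕜) • f ((2:𝕜) • y) - (64:𝕜) • f y := by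
  have e := hf y ((2:𝕜) • y)
  rw [show (2:𝕜) • y + (2:𝕜) • y = (4:𝕜) • y by module, sub_self, hf.map_zero,
    show y + (2:𝕜) • y = (3:𝕜) • y by module, show y - (2:𝕜) • y = -y by module,
    hf.map_neg, hf.map_three_smul] at e
  linear_combination (norm := module) e

theorem map_two_smul_add_add_map_two_smul_sub (hf : IsQuadraticQuarticFunctional 𝕜 f)
    (x y : X) :
    f ((2:𝕜) • (x + y)) + f ((2:𝕜) • (x - y)) =
      (16:𝕜) • f (x + y) + (16:𝕜) • f (x - y) + (2:𝕜) • f ((2:𝕜) • x)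
        - (32:𝕜) • f x + (2:𝕜) • f ((2:𝕜) • y) - (32:𝕜) • f y := by
  rw [smul_add, smul_sub]
  linear_combination (norm := module) hf x ((2:𝕜) • y) +
    (4:𝕜) • hf.map_add_two_smul_add_map_sub_two_smul x y

theorem isQuadraticFunctional (hf : IsQuadraticQuarticFunctional 𝕜 f) :
    IsQuadraticFunctional 𝕜 fun x => f ((2:𝕜) • x) - (16:𝕜) • f x := by
  intro x y
  linear_combination (norm := module) hf.map_two_smul_add_add_map_two_smul_sub x y

theorem isQuarticFunctional (hf : IsQuadraticQuarticFunctional 𝕜 f) :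
    IsQuarticFunctional 𝕜 fun x => f ((2:𝕜) • x) - (4:𝕜) • f x := by
  intro x y
  have e := hf.map_two_smul_add_add_map_two_smul_sub x ((2:𝕜) • y)
  rw [smul_smul, show (2:𝕜) * 2 = 4 by norm_num, hf.map_four_smul] at e
  linear_combination (norm := module)
    e + (12:𝕜) • hf.map_add_two_smul_add_map_sub_two_smul x y
      - (4:𝕜) • hf.map_two_smul_add_add_map_two_smul_sub x y

end IsQuadraticQuarticFunctional

theorem stmt_5 {X Y : Type*} [AddCommGroup X] [Module ℝ X] [AddCommGroup Y] [Module ℝ Y]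
    (f : X → Y)
    (hf : ∀ x y : X, f ((2:ℝ) • x + y) + f ((2:ℝ) • x - y) =
      (4:ℝ) • (f (x + y) + f (x - y)) + (2:ℝ) • (f ((2:ℝ) • x) - (4:ℝ) • f x) - (6:ℝ) • f y)
    (g h : X → Y)
    (hg : ∀ x : X, g x = f ((2:ℝ) • x) - (16:ℝ) • f x)
    (hh : ∀ x : X, h x = f ((2:ℝ) • x) - (4:ℝ) • f x) :
    (∀ x : X, (12:ℝ) • f x = h x - g x) ∧
    (∀ x : X, f x = (1/12 : ℝ) • h x - (1/12 : ℝ) • g x) ∧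
    (∀ x y : X, g (x + y) + g (x - y) = (2:ℝ) • g x + (2:ℝ) • g y) ∧
    (∀ x y : X, h (x + (2:ℝ) • y) + h (x - (2:ℝ) • y) =
      (4:ℝ) • (h (x + y) + h (x - y) + (6:ℝ) • h y) - (6:ℝ) • h x) := by
  have hf : IsQuadraticQuarticFunctional ℝ f := hf
  obtain rfl : g = _ := funext hg
  obtain rfl : h = _ := funext hh
  exact ⟨fun x => by module, fun x => by module,
    hf.isQuadraticFunctional, hf.isQuarticFunctional⟩
end

section
/- A function f : X → Y between real vector spaces satisfies f(2x+y) + f(2x−y) = 4[f(x+y) + f(x−y)] + 2[f(2x) − 4f(x)] − 6f(y) for all x, y ∈ X if and only if there exist a symmetric multi-additive map M : X⁴ → Y and a symmetric bi-additive map B : X × X → Y such that f(x) = M(x,x,x,x) + B(x,x) for all x ∈ X. -/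
set_option linter.unusedSectionVars false
set_option maxHeartbeats 4000000

section aux
variable {X Y : Type*} [AddCommGroup X] [Module ℝ X] [AddCommGroup Y] [Module ℝ Y]

private lemma smul_cancel {a : ℝ} (ha : a ≠ 0) {u v : Y} (h : a • u = a • v) : u = v := by
  have := congrArg (fun w => a⁻¹ • w) h
  simpa [smul_smul, inv_mul_cancel₀ ha] using this

private noncomputable def qB (g : X → Y) (x y : X) : Y := ((4:ℝ)⁻¹) • (g (x+y) - g (x-y))
private noncomputable def Kq (h : X → Y) (u v : X) : Y :=
  ((12:ℝ)⁻¹) • (h (u+v) + h (u-v) - (2:ℝ)•h u - (2:ℝ)•h v)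
private noncomputable def Lq (h : X → Y) (a b y : X) : Y := qB (fun x => Kq h x y) a b
private noncomputable def Mq (h : X → Y) (a b c d : X) : Y := qB (Lq h a b) c d
private noncomputable def Rfun (h : X → Y) (x y z : X) : Y :=
  h (x+y+z) + h (x+y-z) + h (x-y+z) + h (x-y-z)
  - (2:ℝ)•h (x+y) - (2:ℝ)•h (x-y) - (2:ℝ)•h (x+z) - (2:ℝ)•h (x-z)
  - (2:ℝ)•h (y+z) - (2:ℝ)•h (y-z) + (4:ℝ)•h x + (4:ℝ)•h y + (4:ℝ)•h z

section quad
variable (g : X → Y) (hg : ∀ x y, g (x+y) + g (x-y) = (2:ℝ) • g x + (2:ℝ) • g y)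
include hg

private lemma qg0 : g 0 = 0 := by
  have h := hg 0 0
  simp only [add_zero, sub_zero] at h
  have h2 : (2:ℝ) • g 0 = (2:ℝ) • (0:Y) := by
    rw [smul_zero]; linear_combination (norm := module) -h
  exact smul_cancel two_ne_zero h2

private lemma qeven (x : X) : g (-x) = g x := by
  have h := hg 0 x
  have h0 := qg0 g hg
  rw [zero_add, zero_sub, h0] at h
  linear_combination (norm := module) h

private lemma qB_diag (x : X) : qB g x x = g x := by
  have h := hg x x
  have h0 := qg0 g hg
  rw [sub_self, h0] at h
  unfold qB
  rw [sub_self, h0, sub_zero]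
  have h4 : g (x + x) = (4:ℝ) • g x := by linear_combination (norm := module) h
  rw [h4, smul_smul]
  norm_num

private lemma qB_symm (x y : X) : qB g x y = qB g y x := by
  have he : g (x - y) = g (y - x) := by
    have := qeven g hg (x - y)
    rw [show -(x-y) = y - x by abel] at this
    exact this.symm
  unfold qB
  rw [he, show x + y = y + x by abel]

private lemma qB_addl (x y z : X) : qB g (x+y) z = qB g x z + qB g y z := by
  have h1 : g (x+y+z) + g (x+z-y) = (2:ℝ)•g (x+z) + (2:ℝ)•g y := by
    have t := hg (x+z) y; rw [show x+z+y = x+y+z by abel] at t; exact t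
  have h2 : g (x+y-z) + g (x-z-y) = (2:ℝ)•g (x-z) + (2:ℝ)•g y := by
    have t := hg (x-z) y; rw [show x-z+y = x+y-z by abel] at t; exact t
  have h3 : g (x+y+z) + g (y+z-x) = (2:ℝ)•g (y+z) + (2:ℝ)•g x := by
    have t := hg (y+z) x; rw [show y+z+x = x+y+z by abel] at t; exact t
  have h4 : g (x+y-z) + g (y-z-x) = (2:ℝ)•g (y-z) + (2:ℝ)•g x := by
    have t := hg (y-z) x; rw [show y-z+x = x+y-z by abel] at t; exact t
  have e1 : g (x+z-y) = g (y-z-x) := by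
    have := qeven g hg (x+z-y); rw [show -(x+z-y) = y-z-x by abel] at this; exact this.symm
  have e2 : g (y+z-x) = g (x-z-y) := by
    have := qeven g hg (y+z-x); rw [show -(y+z-x) = x-z-y by abel] at this; exact this.symm
  unfold qB
  linear_combination (norm := module) ((8:ℝ)⁻¹) • h1 - ((8:ℝ)⁻¹) • h2 + ((8:ℝ)⁻¹) • h3
    - ((8:ℝ)⁻¹) • h4 - ((8:ℝ)⁻¹) • e1 - ((8:ℝ)⁻¹) • e2

private lemma qB_addr (x y z : X) : qB g x (y+z) = qB g x y + qB g x z := by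
  rw [qB_symm g hg, qB_addl g hg, qB_symm g hg y x, qB_symm g hg z x]
end quad

section quartic
variable (h : X → Y)
  (hq : ∀ x y, h (x+x+y) + h (x+x-y) =
    (4:ℝ)•h (x+y) + (4:ℝ)•h (x-y) + (24:ℝ)•h x - (6:ℝ)•h y)
include hq

private lemma hh0 : h 0 = 0 := by
  have t := hq 0 0
  simp only [add_zero, sub_zero, zero_add] at t
  have : (24:ℝ) • h 0 = (24:ℝ) • (0:Y) := by
    rw [smul_zero]; linear_combination (norm := module) -t
  exact smul_cancel (by norm_num) this

private lemma hheven (x : X) : h (-x) = h x := by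
  have t := hq 0 x
  simp only [add_zero, zero_add, zero_sub] at t
  have h0 := hh0 h hq
  rw [h0] at t
  have : (3:ℝ) • h (-x) = (3:ℝ) • h x := by linear_combination (norm := module) -t
  exact smul_cancel (by norm_num) this

private lemma hhdbl (x : X) : h (x+x) = (16:ℝ) • h x := by
  have t := hq x 0
  simp only [add_zero, sub_zero] at t
  rw [hh0 h hq] at t
  have : (2:ℝ) • h (x+x) = (2:ℝ) • ((16:ℝ) • h x) := by
    linear_combination (norm := module) t
  exact smul_cancel (by norm_num) this

private lemma Rstep (x y z : X) : Rfun h (x+x) y z = (4:ℝ) • Rfun h x y z := by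
  have a1 : h (x+x+y+z) + h (x+x-y-z) =
      (4:ℝ)•h (x+y+z) + (4:ℝ)•h (x-y-z) + (24:ℝ)•h x - (6:ℝ)•h (y+z) := by
    have t := hq x (y+z)
    rw [show x+x+(y+z) = x+x+y+z by abel, show x+x-(y+z) = x+x-y-z by abel,
        show x+(y+z) = x+y+z by abel, show x-(y+z) = x-y-z by abel] at t
    exact t
  have a2 : h (x+x+y-z) + h (x+x-y+z) =
      (4:ℝ)•h (x+y-z) + (4:ℝ)•h (x-y+z) + (24:ℝ)•h x - (6:ℝ)•h (y-z) := by
    have t := hq x (y-z)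
    rw [show x+x+(y-z) = x+x+y-z by abel, show x+x-(y-z) = x+x-y+z by abel,
        show x+(y-z) = x+y-z by abel, show x-(y-z) = x-y+z by abel] at t
    exact t
  have a3 := hq x y
  have a4 := hq x z
  have a5 := hhdbl h hq x
  unfold Rfun
  linear_combination (norm := module) a1 + a2 - (2:ℝ)•a3 - (2:ℝ)•a4 + (4:ℝ)•a5

private lemma Rsym12 (x y z : X) : Rfun h x y z = Rfun h y x z := by
  have e1 : h (y-x+z) = h (x-y-z) := by
    have := hheven h hq (y-x+z); rw [show -(y-x+z) = x-y-z by abel] at this; exact this.symm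
  have e2 : h (y-x-z) = h (x-y+z) := by
    have := hheven h hq (y-x-z); rw [show -(y-x-z) = x-y+z by abel] at this; exact this.symm
  have e3 : h (y-x) = h (x-y) := by
    have := hheven h hq (y-x); rw [show -(y-x) = x-y by abel] at this; exact this.symm
  unfold Rfun
  rw [show y+x+z = x+y+z by abel, show y+x-z = x+y-z by abel, show y+x = x+y by abel,
      e1, e2, e3]
  abel

private lemma Rsym13 (x y z : X) : Rfun h x y z = Rfun h z y x := by
  have e1 : h (z+y-x) = h (x-y-z) := by
    have := hheven h hq (z+y-x); rw [show -(z+y-x) = x-y-z by abel] at this; exact this.symm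
  have e2 : h (z-y-x) = h (x+y-z) := by
    have := hheven h hq (z-y-x); rw [show -(z-y-x) = x+y-z by abel] at this; exact this.symm
  have e3 : h (z-y) = h (y-z) := by
    have := hheven h hq (z-y); rw [show -(z-y) = y-z by abel] at this; exact this.symm
  have e4 : h (z-x) = h (x-z) := by
    have := hheven h hq (z-x); rw [show -(z-x) = x-z by abel] at this; exact this.symm
  have e5 : h (y-x) = h (x-y) := by
    have := hheven h hq (y-x); rw [show -(y-x) = x-y by abel] at this; exact this.symm
  unfold Rfun
  rw [e1, e2, show z+y+x = x+y+z by abel, show z-y+x = x-y+z by abel,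
      show z+y = y+z by abel, show z+x = x+z by abel, show y+x = x+y by abel, e3, e4, e5]
  abel

private lemma Rscale (x y z : X) : Rfun h (x+x) (y+y) (z+z) = (16:ℝ) • Rfun h x y z := by
  have d : ∀ u : X, h (u+u) = (16:ℝ) • h u := hhdbl h hq
  have d1 := d (x+y+z); have d2 := d (x+y-z); have d3 := d (x-y+z); have d4 := d (x-y-z)
  have d5 := d (x+y); have d6 := d (x-y); have d7 := d (x+z); have d8 := d (x-z)
  have d9 := d (y+z); have d10 := d (y-z); have d11 := d x; have d12 := d y; have d13 := d z
  unfold Rfun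
  rw [show x+x+(y+y)+(z+z) = x+y+z+(x+y+z) by abel, show x+x+(y+y)-(z+z) = x+y-z+(x+y-z) by abel,
      show x+x-(y+y)+(z+z) = x-y+z+(x-y+z) by abel, show x+x-(y+y)-(z+z) = x-y-z+(x-y-z) by abel,
      show x+x+(y+y) = x+y+(x+y) by abel, show x+x-(y+y) = x-y+(x-y) by abel,
      show x+x+(z+z) = x+z+(x+z) by abel, show x+x-(z+z) = x-z+(x-z) by abel,
      show y+y+(z+z) = y+z+(y+z) by abel, show y+y-(z+z) = y-z+(y-z) by abel]
  rw [d1, d2, d3, d4, d5, d6, d7, d8, d9, d10, d11, d12, d13]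
  module

private lemma Rzero (x y z : X) : Rfun h x y z = 0 := by
  have s1 := Rstep h hq x (y+y) (z+z)
  have s2 := Rsym12 h hq x (y+y) (z+z)
  have s3 := Rstep h hq y x (z+z)
  have s4 := Rsym13 h hq y x (z+z)
  have s5 := Rstep h hq z x y
  have s6 : Rfun h z x y = Rfun h x y z := by
    rw [Rsym13 h hq z x y, Rsym12 h hq y x z]
  have sc := Rscale h hq x y z
  have key : (48:ℝ) • Rfun h x y z = (48:ℝ) • (0:Y) := by
    rw [smul_zero]
    linear_combination (norm := module) sc - s1 - (4:ℝ)•s2 - (4:ℝ)•s3 - (16:ℝ)•s4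
      - (16:ℝ)•s5 - (64:ℝ)•s6
  exact smul_cancel (by norm_num) key

private lemma Kquad (z x y : X) :
    Kq h (x+y) z + Kq h (x-y) z = (2:ℝ)•Kq h x z + (2:ℝ)•Kq h y z := by
  have r := Rzero h hq x y z
  unfold Kq
  unfold Rfun at r
  linear_combination (norm := module) ((12:ℝ)⁻¹) • r

private lemma Ksym (x y : X) : Kq h x y = Kq h y x := by
  have e : h (x-y) = h (y-x) := by
    have := hheven h hq (x-y); rw [show -(x-y) = y-x by abel] at this; exact this.symm
  unfold Kq
  rw [show x+y = y+x by abel, e]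
  module

private lemma K2quad (x y w : X) :
    Kq h x (y+w) + Kq h x (y-w) = (2:ℝ)•Kq h x y + (2:ℝ)•Kq h x w := by
  rw [Ksym h hq x (y+w), Ksym h hq x (y-w), Ksym h hq x y, Ksym h hq x w]
  exact Kquad h hq x y w

private lemma Lq_addl (a a' b y : X) : Lq h (a+a') b y = Lq h a b y + Lq h a' b y := by
  unfold Lq; exact qB_addl _ (Kquad h hq y) a a' b

private lemma Lq_symm (a b y : X) : Lq h a b y = Lq h b a y := by
  unfold Lq; exact qB_symm _ (Kquad h hq y) a b

private lemma Lq_diag (x y : X) : Lq h x x y = Kq h x y := by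
  unfold Lq; exact qB_diag _ (Kquad h hq y) x

private lemma Lq_quad (a b y w : X) :
    Lq h a b (y+w) + Lq h a b (y-w) = (2:ℝ)•Lq h a b y + (2:ℝ)•Lq h a b w := by
  have k1 := K2quad h hq (a+b) y w
  have k2 := K2quad h hq (a-b) y w
  unfold Lq qB
  linear_combination (norm := module) ((4:ℝ)⁻¹) • k1 - ((4:ℝ)⁻¹) • k2

private lemma Mq_add3 (a b c c' d : X) :
    Mq h a b (c+c') d = Mq h a b c d + Mq h a b c' d := by
  unfold Mq; exact qB_addl _ (Lq_quad h hq a b) c c' d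

private lemma Mq_add4 (a b c d d' : X) :
    Mq h a b c (d+d') = Mq h a b c d + Mq h a b c d' := by
  unfold Mq; exact qB_addr _ (Lq_quad h hq a b) c d d'

private lemma Mq_sym34 (a b c d : X) : Mq h a b c d = Mq h a b d c := by
  unfold Mq; exact qB_symm _ (Lq_quad h hq a b) c d

private lemma Mq_diag34 (a b c : X) : Mq h a b c c = Lq h a b c := by
  unfold Mq; exact qB_diag _ (Lq_quad h hq a b) c

private lemma Mq_add1 (a a' b c d : X) :
    Mq h (a+a') b c d = Mq h a b c d + Mq h a' b c d := by
  unfold Mq qB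
  rw [Lq_addl h hq a a' b (c+d), Lq_addl h hq a a' b (c-d)]
  module

private lemma Mq_sym12 (a b c d : X) : Mq h a b c d = Mq h b a c d := by
  unfold Mq qB
  rw [Lq_symm h hq a b (c+d), Lq_symm h hq a b (c-d)]

private lemma Mq_add2 (a b b' c d : X) :
    Mq h a (b+b') c d = Mq h a b c d + Mq h a b' c d := by
  rw [Mq_sym12 h hq a (b+b') c d, Mq_add1 h hq b b' a c d,
      Mq_sym12 h hq b a c d, Mq_sym12 h hq b' a c d]

private lemma M192 (a b c d : X) : (192:ℝ) • Mq h a b c d =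
    h (a+b+c+d) + h (a+b-c-d) - h (a-b+c+d) - h (a-b-c-d)
    - h (a+b+c-d) - h (a+b-c+d) + h (a-b+c-d) + h (a-b-c+d) := by
  simp only [Mq, qB, Lq, Kq]
  rw [show a+b+(c+d) = a+b+c+d by abel, show a+b-(c+d) = a+b-c-d by abel,
      show a-b+(c+d) = a-b+c+d by abel, show a-b-(c+d) = a-b-c-d by abel,
      show a+b+(c-d) = a+b+c-d by abel, show a+b-(c-d) = a+b-c+d by abel,
      show a-b+(c-d) = a-b+c-d by abel, show a-b-(c-d) = a-b-c+d by abel]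
  module

private lemma Mq_sym23 (a b c d : X) : Mq h a b c d = Mq h a c b d := by
  have m1 := M192 h hq a b c d
  have m2 := M192 h hq a c b d
  rw [show a+c+b+d = a+b+c+d by abel, show a+c-b-d = a-b+c-d by abel,
      show a-c+b+d = a+b-c+d by abel, show a-c-b-d = a-b-c-d by abel,
      show a+c+b-d = a+b+c-d by abel, show a+c-b+d = a-b+c+d by abel,
      show a-c+b-d = a+b-c-d by abel, show a-c-b+d = a-b-c+d by abel] at m2
  have key : (192:ℝ)•Mq h a b c d = (192:ℝ)•Mq h a c b d := by
    rw [m1, m2]; module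
  exact smul_cancel (by norm_num) key

private lemma Mq_diagall (x : X) : Mq h x x x x = h x := by
  rw [Mq_diag34 h hq x x x, Lq_diag h hq x x]
  unfold Kq
  rw [sub_self, hh0 h hq, hhdbl h hq x]
  module

end quartic
end aux

theorem stmt_9 {X Y : Type*} [AddCommGroup X] [Module ℝ X] [AddCommGroup Y] [Module ℝ Y]
    (f : X → Y) :
    (∀ x y : X, f ((2:ℝ) • x + y) + f ((2:ℝ) • x - y) =
      (4:ℝ) • (f (x + y) + f (x - y)) + (2:ℝ) • (f ((2:ℝ) • x) - (4:ℝ) • f x) - (6:ℝ) • f y)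
    ↔ ∃ (M : X → X → X → X → Y) (B : X → X → Y),
        (∀ a a' b c d, M (a + a') b c d = M a b c d + M a' b c d) ∧
        (∀ a b b' c d, M a (b + b') c d = M a b c d + M a b' c d) ∧
        (∀ a b c c' d, M a b (c + c') d = M a b c d + M a b c' d) ∧
        (∀ a b c d d', M a b c (d + d') = M a b c d + M a b c d') ∧
        (∀ a b c d, M a b c d = M b a c d) ∧
        (∀ a b c d, M a b c d = M a c b d) ∧
        (∀ a b c d, M a b c d = M a b d c) ∧
        (∀ x x' y, B (x + x') y = B x y + B x' y) ∧
        (∀ x y y', B x (y + y') = B x y + B x y') ∧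
        (∀ x y, B x y = B y x) ∧
        (∀ x, f x = M x x x x + B x x) := by
  constructor
  · intro hf
    -- normalized functional equation
    have hE : ∀ x y, f (x+x+y) + f (x+x-y) =
        (4:ℝ)•f (x+y) + (4:ℝ)•f (x-y) + (2:ℝ)•f (x+x) - (8:ℝ)•f x - (6:ℝ)•f y := by
      intro x y
      have t := hf x y
      rw [two_smul ℝ x] at t
      linear_combination (norm := module) t
    have hf0 : f 0 = 0 := by
      have t := hE 0 0
      simp only [add_zero, zero_add, sub_zero] at t
      have : (6:ℝ) • f 0 = (6:ℝ) • (0:Y) := by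
        rw [smul_zero]; linear_combination (norm := module) t
      exact smul_cancel (by norm_num) this
    have hfe : ∀ x : X, f (-x) = f x := by
      intro x
      have t := hE 0 x
      simp only [add_zero, zero_add, zero_sub] at t
      rw [hf0] at t
      have : (3:ℝ) • f (-x) = (3:ℝ) • f x := by
        linear_combination (norm := module) -t
      exact smul_cancel (by norm_num) this
    -- quadratic FE for  g t = f(2t) - 16 f t
    have hg2 : ∀ x y : X, (f ((x+y)+(x+y)) - (16:ℝ)•f (x+y)) + (f ((x-y)+(x-y)) - (16:ℝ)•f (x-y))
        = (2:ℝ)•(f (x+x) - (16:ℝ)•f x) + (2:ℝ)•(f (y+y) - (16:ℝ)•f y) := by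
      intro x y
      have I3 := hE x (y+y)
      rw [show x+x+(y+y) = (x+y)+(x+y) by abel, show x+x-(y+y) = (x-y)+(x-y) by abel] at I3
      have I4 := hE y x
      have ev1 : f (y+y-x) = f (x-(y+y)) := by
        have := hfe (x-(y+y)); rw [show -(x-(y+y)) = y+y-x by abel] at this; exact this
      have ev2 : f (y-x) = f (x-y) := by
        have := hfe (x-y); rw [show -(x-y) = y-x by abel] at this; exact this
      rw [show y+y+x = x+(y+y) by abel, show y+x = x+y by abel, ev1, ev2] at I4
      linear_combination (norm := module) I3 + (4:ℝ)•I4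
    -- quartic FE for  h t = f(2t) - 4 f t
    have hq4 : ∀ x y : X, (f ((x+x+y)+(x+x+y)) - (4:ℝ)•f (x+x+y)) + (f ((x+x-y)+(x+x-y)) - (4:ℝ)•f (x+x-y))
        = (4:ℝ)•(f ((x+y)+(x+y)) - (4:ℝ)•f (x+y)) + (4:ℝ)•(f ((x-y)+(x-y)) - (4:ℝ)•f (x-y))
          + (24:ℝ)•(f (x+x) - (4:ℝ)•f x) - (6:ℝ)•(f (y+y) - (4:ℝ)•f y) := by
      intro x y
      have I1 := hE (x+x) (y+y)
      rw [show x+x+(x+x)+(y+y) = (x+x+y)+(x+x+y) by abel,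
          show x+x+(x+x)-(y+y) = (x+x-y)+(x+x-y) by abel,
          show x+x+(y+y) = (x+y)+(x+y) by abel,
          show x+x-(y+y) = (x-y)+(x-y) by abel] at I1
      have I2 := hE x y
      have I5 := hE x x
      rw [show x+x-x = x by abel, show x-x = (0:X) by abel, hf0] at I5
      have I6 := hE x (x+x)
      rw [show x+x-(x+x) = (0:X) by abel, show x+(x+x) = x+x+x by abel,
          show x-(x+x) = -x by abel, hf0, hfe x] at I6
      linear_combination (norm := module) I1 - (4:ℝ)•I2 + (2:ℝ)•I6 + (8:ℝ)•I5
    refine ⟨fun a b c d => ((12:ℝ)⁻¹) • Mq (fun t => f (t+t) - (4:ℝ)•f t) a b c d,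
      fun u v => (-((12:ℝ)⁻¹)) • qB (fun t => f (t+t) - (16:ℝ)•f t) u v,
      ?_, ?_, ?_, ?_, ?_, ?_, ?_, ?_, ?_, ?_, ?_⟩
    · intro a a' b c d
      beta_reduce
      rw [Mq_add1 _ hq4 a a' b c d, smul_add]
    · intro a b b' c d
      beta_reduce
      rw [Mq_add2 _ hq4 a b b' c d, smul_add]
    · intro a b c c' d
      beta_reduce
      rw [Mq_add3 _ hq4 a b c c' d, smul_add]
    · intro a b c d d'
      beta_reduce
      rw [Mq_add4 _ hq4 a b c d d', smul_add]
    · intro a b c d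
      beta_reduce
      rw [Mq_sym12 _ hq4 a b c d]
    · intro a b c d
      beta_reduce
      rw [Mq_sym23 _ hq4 a b c d]
    · intro a b c d
      beta_reduce
      rw [Mq_sym34 _ hq4 a b c d]
    · intro u u' v
      beta_reduce
      rw [qB_addl _ hg2 u u' v, smul_add]
    · intro u v v'
      beta_reduce
      rw [qB_addr _ hg2 u v v', smul_add]
    · intro u v
      beta_reduce
      rw [qB_symm _ hg2 u v]
    · intro x
      beta_reduce
      rw [Mq_diagall _ hq4 x, qB_diag _ hg2 x]
      show f x = ((12:ℝ)⁻¹) • (f (x+x) - (4:ℝ)•f x) + (-((12:ℝ)⁻¹)) • (f (x+x) - (16:ℝ)•f x)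
      module
  · rintro ⟨M, B, hM1, hM2, hM3, hM4, hM5, hM6, hM7, hB1, hB2, hBs, hfx⟩
    intro x y
    -- zero and neg lemmas
    have hM10 : ∀ b c d, M 0 b c d = 0 := by
      intro b c d
      have t := hM1 0 0 b c d
      rw [add_zero] at t
      exact left_eq_add.mp t
    have hM40 : ∀ a b c, M a b c 0 = 0 := by
      intro a b c
      have t := hM4 a b c 0 0
      rw [add_zero] at t
      exact left_eq_add.mp t
    have hM4n : ∀ a b c d, M a b c (-d) = - M a b c d := by
      intro a b c d
      have t := hM4 a b c d (-d)
      rw [add_neg_cancel, hM40] at t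
      exact eq_neg_of_add_eq_zero_right t.symm
    have hM3n : ∀ a b c d, M a b (-c) d = - M a b c d := by
      intro a b c d
      rw [hM7 a b (-c) d, hM4n a b d c, ← hM7 a b c d]
    have hM2n : ∀ a b c d, M a (-b) c d = - M a b c d := by
      intro a b c d
      rw [hM6 a (-b) c d, hM3n a c b d, ← hM6 a b c d]
    have hM1n : ∀ a b c d, M (-a) b c d = - M a b c d := by
      intro a b c d
      rw [hM5 (-a) b c d, hM2n b a c d, ← hM5 a b c d]
    have hB20 : ∀ u, B u 0 = 0 := by
      intro u
      have t := hB2 u 0 0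
      rw [add_zero] at t
      exact left_eq_add.mp t
    have hB2n : ∀ u v, B u (-v) = - B u v := by
      intro u v
      have t := hB2 u v (-v)
      rw [add_neg_cancel, hB20] at t
      exact eq_neg_of_add_eq_zero_right t.symm
    have hB1n : ∀ u v, B (-u) v = - B u v := by
      intro u v
      rw [hBs (-u) v, hB2n v u, ← hBs u v]
    have expM : ∀ u v, M (u+v) (u+v) (u+v) (u+v) =
        M u u u u + (4:ℝ)•M u u u v + (6:ℝ)•M u u v v + (4:ℝ)•M u v v v + M v v v v := by
      intro u v
      simp only [hM1, hM2, hM3, hM4]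
      rw [hM5 v u u u, hM6 u v u u, hM7 u u v u,
          hM6 v v u u, hM5 v u v u, hM5 v u u v, hM7 u v v u, hM6 u v u v,
          hM7 v v v u, hM6 v v u v, hM5 v u v v]
      module
    have expB : ∀ u v, B (u+v) (u+v) = B u u + (2:ℝ)•B u v + B v v := by
      intro u v
      simp only [hB1, hB2]
      rw [hBs v u]
      module
    have hv1 : f (x+y) = M x x x x + (4:ℝ)•M x x x y + (6:ℝ)•M x x y y
        + (4:ℝ)•M x y y y + M y y y y + B x x + (2:ℝ)•B x y + B y y := by
      rw [hfx (x+y), expM x y, expB x y]; module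
    have hv2 : f (x-y) = M x x x x - (4:ℝ)•M x x x y + (6:ℝ)•M x x y y
        - (4:ℝ)•M x y y y + M y y y y + B x x - (2:ℝ)•B x y + B y y := by
      rw [sub_eq_add_neg, hfx (x + -y), expM x (-y), expB x (-y)]
      simp only [hM1n, hM2n, hM3n, hM4n, hB1n, hB2n, smul_neg, neg_neg]
      module
    have hv3 : f (x+x) = (16:ℝ)•M x x x x + (4:ℝ)•B x x := by
      rw [hfx (x+x), expM x x, expB x x]; module
    have hv4 : f (x+x+y) = (16:ℝ)•M x x x x + (32:ℝ)•M x x x y + (24:ℝ)•M x x y y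
        + (8:ℝ)•M x y y y + M y y y y + (4:ℝ)•B x x + (4:ℝ)•B x y + B y y := by
      rw [hfx (x+x+y), expM (x+x) y, expB (x+x) y]
      simp only [hM1, hM2, hM3, hM4, hB1, hB2]
      module
    have hv5 : f (x+x-y) = (16:ℝ)•M x x x x - (32:ℝ)•M x x x y + (24:ℝ)•M x x y y
        - (8:ℝ)•M x y y y + M y y y y + (4:ℝ)•B x x - (4:ℝ)•B x y + B y y := by
      rw [sub_eq_add_neg, hfx (x+x + -y), expM (x+x) (-y), expB (x+x) (-y)]
      simp only [hM1n, hM2n, hM3n, hM4n, hB1n, hB2n, smul_neg, neg_neg]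
      simp only [hM1, hM2, hM3, hM4, hB1, hB2]
      module
    rw [two_smul ℝ x, hv4, hv5, hv1, hv2, hv3, hfx x, hfx y]
    module
end

section
/- Let X be a real normed space and f : X → ℝ a function with f(0) = 0 such that |f(2x+y) + f(2x−y) − 4f(x+y) − 4f(x−y) − 2f(2x) + 8f(x) + 6f(y)| ≤ δ for all x, y ∈ X and some δ ≥ 0. Then, with g(x) := f(2x) − 16f(x), the sequence (g(2ⁿx)/4ⁿ) is Cauchy for every x ∈ X and converges to a function Q₁ : X → ℝ that satisfies the quadratic functional equation Q₁(x+y) + Q₁(x−y) = 2Q₁(x) + 2Q₁(y). -/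
/-!
The function `g` kills the quartic part of `f`: a linear combination of five instances of the
mixed defect of `f` is exactly the quadratic defect of `g`, so `g` is an approximately
quadratic function. Hyers' direct method then applies: `|g (2x) - 4 g x|` is bounded, so
`g (2ⁿx) / 4ⁿ` moves by a geometrically decaying amount at each step, and the quadratic defect
of the rescaled functions is at most a constant times `4⁻ⁿ`, hence vanishes in the limit.
-/

open Filter Topology

section Quadratic

variable {X : Type*} [AddCommGroup X] [Module ℝ X]

def quadraticDefect (q : X → ℝ) (x y : X) : ℝ :=
  q (x + y) + q (x - y) - 2 * q x - 2 * q y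

noncomputable def quadraticRescale (q : X → ℝ) (n : ℕ) (x : X) : ℝ :=
  q ((2 : ℝ) ^ n • x) / 4 ^ n

theorem quadraticDefect_quadraticRescale (q : X → ℝ) (n : ℕ) (x y : X) :
    quadraticDefect (quadraticRescale q n) x y =
      quadraticDefect q ((2 : ℝ) ^ n • x) ((2 : ℝ) ^ n • y) / 4 ^ n := by
  simp only [quadraticDefect, quadraticRescale, smul_add, smul_sub]
  ring

variable {q : X → ℝ} {ε : ℝ} (hq : ∀ x y, |quadraticDefect q x y| ≤ ε)
include hq

theorem abs_map_two_smul_sub_four_mul_le (x : X) : |q ((2 : ℝ) • x) - 4 * q x| ≤ 3 / 2 * ε := by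
  have h₀ := hq 0 0
  have hx := hq x x
  simp only [quadraticDefect, add_zero, sub_self, ← two_smul ℝ x] at h₀ hx
  rw [abs_le] at h₀ hx ⊢
  constructor <;> linarith [h₀.1, h₀.2, hx.1, hx.2]

theorem abs_quadraticDefect_quadraticRescale_le (n : ℕ) (x y : X) :
    |quadraticDefect (quadraticRescale q n) x y| ≤ ε / 4 ^ n := by
  rw [quadraticDefect_quadraticRescale, abs_div, abs_of_pos (by positivity : (0 : ℝ) < 4 ^ n)]
  exact div_le_div_of_nonneg_right (hq _ _) (by positivity)

theorem dist_quadraticRescale_succ_le (x : X) (n : ℕ) :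
    dist (quadraticRescale q n x) (quadraticRescale q (n + 1) x) ≤ 3 / 8 * ε * (1 / 4) ^ n := by
  have h := abs_map_two_smul_sub_four_mul_le hq ((2 : ℝ) ^ n • x)
  rw [smul_smul, ← pow_succ'] at h
  have hdiff : quadraticRescale q n x - quadraticRescale q (n + 1) x =
      -(q ((2 : ℝ) ^ (n + 1) • x) - 4 * q ((2 : ℝ) ^ n • x)) / 4 ^ (n + 1) := by
    simp only [quadraticRescale, pow_succ]
    field_simp
    ring
  rw [Real.dist_eq, hdiff, abs_div, abs_neg, abs_of_pos (by positivity : (0 : ℝ) < 4 ^ (n + 1)),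
    div_le_iff₀ (by positivity)]
  calc _ ≤ 3 / 2 * ε := h
    _ = 3 / 8 * ε * (1 / 4) ^ n * 4 ^ (n + 1) := by
      rw [pow_succ, ← mul_assoc, mul_assoc _ ((1 / 4 : ℝ) ^ n), ← mul_pow]
      norm_num
      ring

theorem cauchySeq_quadraticRescale (x : X) : CauchySeq fun n => quadraticRescale q n x :=
  cauchySeq_of_le_geometric (1 / 4) _ (by norm_num) (dist_quadraticRescale_succ_le hq x)

theorem quadraticDefect_eq_zero_of_tendsto {Q : X → ℝ}
    (hQ : ∀ x, Tendsto (fun n => quadraticRescale q n x) atTop (𝓝 (Q x))) (x y : X) :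
    quadraticDefect Q x y = 0 := by
  have h_lim : Tendsto (fun n => quadraticDefect (quadraticRescale q n) x y) atTop
      (𝓝 (quadraticDefect Q x y)) :=
    ((((hQ _).add (hQ _)).sub ((hQ x).const_mul 2)).sub ((hQ y).const_mul 2))
  have h_zero : Tendsto (fun n => quadraticDefect (quadraticRescale q n) x y) atTop (𝓝 0) := by
    refine squeeze_zero_norm (fun n => abs_quadraticDefect_quadraticRescale_le hq n x y) ?_
    simpa [div_eq_mul_inv] using (tendsto_pow_atTop_nhds_zero_of_lt_one (r := (4 : ℝ)⁻¹) (by norm_num)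
      (by norm_num)).const_mul ε
  exact tendsto_nhds_unique h_lim h_zero

end Quadratic

section Mixed

variable {X : Type*} [AddCommGroup X] [Module ℝ X]

def mixedDefect (f : X → ℝ) (x y : X) : ℝ :=
  f ((2 : ℝ) • x + y) + f ((2 : ℝ) • x - y) - 4 * f (x + y) - 4 * f (x - y)
    - 2 * f ((2 : ℝ) • x) + 8 * f x + 6 * f y

theorem quadraticDefect_eq_mixedDefect {f g : X → ℝ} (hg : ∀ x, g x = f ((2 : ℝ) • x) - 16 * f x)
    (x y : X) :
    quadraticDefect g x y = mixedDefect f x ((2 : ℝ) • y) + 4 * mixedDefect f y x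
      - 16 / 3 * mixedDefect f 0 (x - y) + 4 / 3 * mixedDefect f 0 (x - (2 : ℝ) • y)
      + 4 * mixedDefect f 0 0 := by
  simp only [quadraticDefect, mixedDefect, hg, smul_add, smul_sub, smul_zero, zero_add, zero_sub,
    add_zero, sub_zero, neg_sub]
  abel_nf
  ring

theorem abs_quadraticDefect_le_of_mixedDefect {f g : X → ℝ} {δ : ℝ}
    (hg : ∀ x, g x = f ((2 : ℝ) • x) - 16 * f x) (hf : ∀ x y, |mixedDefect f x y| ≤ δ) (x y : X) :
    |quadraticDefect g x y| ≤ 47 / 3 * δ := by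
  rw [quadraticDefect_eq_mixedDefect hg]
  have h₁ := abs_le.mp (hf x ((2 : ℝ) • y))
  have h₂ := abs_le.mp (hf y x)
  have h₃ := abs_le.mp (hf 0 (x - y))
  have h₄ := abs_le.mp (hf 0 (x - (2 : ℝ) • y))
  have h₅ := abs_le.mp (hf 0 0)
  rw [abs_le]
  constructor <;> linarith [h₁.1, h₁.2, h₂.1, h₂.2, h₃.1, h₃.2, h₄.1, h₄.2, h₅.1, h₅.2]

end Mixed

theorem stmt_11_general {X : Type*} [NormedAddCommGroup X] [NormedSpace ℝ X]
    (f : X → ℝ) (δ : ℝ)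
    (hf : ∀ x y : X, |f ((2:ℝ) • x + y) + f ((2:ℝ) • x - y) - 4 * f (x + y) - 4 * f (x - y)
      - 2 * f ((2:ℝ) • x) + 8 * f x + 6 * f y| ≤ δ)
    (g : X → ℝ) (hg : ∀ x : X, g x = f ((2:ℝ) • x) - 16 * f x) :
    (∀ x : X, CauchySeq (fun n : ℕ => g (((2:ℝ)^n) • x) / 4 ^ n)) ∧
    ∃ Q₁ : X → ℝ,
      (∀ x : X, Filter.Tendsto (fun n : ℕ => g (((2:ℝ)^n) • x) / 4 ^ n)
        Filter.atTop (nhds (Q₁ x))) ∧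
      (∀ x y : X, Q₁ (x + y) + Q₁ (x - y) = 2 * Q₁ x + 2 * Q₁ y) := by
  have hq := abs_quadraticDefect_le_of_mixedDefect hg hf
  have h_cauchy := cauchySeq_quadraticRescale hq
  have h_tendsto x := (h_cauchy x).tendsto_limUnder
  refine ⟨h_cauchy, fun x => limUnder atTop fun n => quadraticRescale g n x, h_tendsto,
    fun x y => ?_⟩
  have h_zero := quadraticDefect_eq_zero_of_tendsto hq h_tendsto x y
  rw [quadraticDefect] at h_zero
  linarith

theorem stmt_11 {X : Type*} [NormedAddCommGroup X] [NormedSpace ℝ X]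
    (f : X → ℝ) (hf0 : f 0 = 0) (δ : ℝ) (hδ : 0 ≤ δ)
    (hf : ∀ x y : X, |f ((2:ℝ) • x + y) + f ((2:ℝ) • x - y) - 4 * f (x + y) - 4 * f (x - y)
      - 2 * f ((2:ℝ) • x) + 8 * f x + 6 * f y| ≤ δ)
    (g : X → ℝ) (hg : ∀ x : X, g x = f ((2:ℝ) • x) - 16 * f x) :
    (∀ x : X, CauchySeq (fun n : ℕ => g (((2:ℝ)^n) • x) / 4 ^ n)) ∧
    ∃ Q₁ : X → ℝ,
      (∀ x : X, Filter.Tendsto (fun n : ℕ => g (((2:ℝ)^n) • x) / 4 ^ n)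
        Filter.atTop (nhds (Q₁ x))) ∧
      (∀ x y : X, Q₁ (x + y) + Q₁ (x - y) = 2 * Q₁ x + 2 * Q₁ y) :=
  stmt_11_general f δ hf g hg
end

section
/- Let Y be a real Banach space, X a real vector space, and g : X → Y a map satisfying ‖g(2x) − 4g(x)‖ ≤ ε for all x ∈ X and some ε ≥ 0. Then there exists a unique map Q : X → Y with Q(2x) = 4Q(x) for all x and ‖g(x) − Q(x)‖ ≤ ε/3 for all x ∈ X; Q is given by Q(x) = lim_{n→∞} g(2ⁿx)/4ⁿ. -/
/-! Hyers' direct method: with `a x n = b⁻ⁿ g(rⁿ x)`, the defect bound rescaled by `b⁻⁽ⁿ⁺¹⁾`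
gives `dist (a x n) (a x (n+1)) ≤ (ε / b) b⁻ⁿ`, so `a x` is Cauchy.  Its limit `Q x` inherits
`Q (r x) = b Q x` from `a (r x) n = b a x (n+1)`, and summing the geometric series bounds
`‖g x - Q x‖` by `(ε / b) / (1 - b⁻¹) = ε / (b - 1)`. -/

open Filter Topology

section HyersUlam

variable {X Y : Type*} [AddCommGroup X] [Module ℝ X] [NormedAddCommGroup Y] [NormedSpace ℝ Y]

noncomputable def hyersUlamSeq (r b : ℝ) (g : X → Y) (x : X) (n : ℕ) : Y :=
  (b ^ n)⁻¹ • g (r ^ n • x)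

variable {r b ε : ℝ} {g : X → Y}

@[simp]
theorem hyersUlamSeq_zero (x : X) : hyersUlamSeq r b g x 0 = g x := by
  simp [hyersUlamSeq]

theorem hyersUlamSeq_smul (hb : b ≠ 0) (x : X) (n : ℕ) :
    hyersUlamSeq r b g (r • x) n = b • hyersUlamSeq r b g x (n + 1) := by
  simp only [hyersUlamSeq, smul_smul, pow_succ]
  congr 2
  field_simp

theorem tendsto_hyersUlamSeq_smul (hb : b ≠ 0) {x : X} {L : Y}
    (hL : Tendsto (hyersUlamSeq r b g x) atTop (𝓝 L)) :
    Tendsto (hyersUlamSeq r b g (r • x)) atTop (𝓝 (b • L)) := by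
  have hshift := (hL.comp (tendsto_add_atTop_nat 1)).const_smul b
  exact hshift.congr fun n => (hyersUlamSeq_smul hb x n).symm

theorem dist_hyersUlamSeq_succ_le (hb : 0 < b) (hg : ∀ x, ‖g (r • x) - b • g x‖ ≤ ε)
    (x : X) (n : ℕ) :
    dist (hyersUlamSeq r b g x n) (hyersUlamSeq r b g x (n + 1)) ≤ ε / b * b⁻¹ ^ n := by
  have hdiff : hyersUlamSeq r b g x (n + 1) - hyersUlamSeq r b g x n =
      (b ^ (n + 1))⁻¹ • (g (r • r ^ n • x) - b • g (r ^ n • x)) := by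
    rw [smul_sub, smul_smul, ← mul_smul, ← pow_succ']
    congr 2
    rw [pow_succ, mul_inv, inv_mul_cancel_right₀ hb.ne', hyersUlamSeq]
  rw [dist_eq_norm', hdiff, norm_smul, Real.norm_of_nonneg (by positivity)]
  calc (b ^ (n + 1))⁻¹ * ‖g (r • r ^ n • x) - b • g (r ^ n • x)‖
      ≤ (b ^ (n + 1))⁻¹ * ε := by gcongr; exact hg _
    _ = ε / b * b⁻¹ ^ n := by rw [pow_succ, inv_pow]; ring

theorem norm_sub_le_of_tendsto_hyersUlamSeq (hb : 1 < b)
    (hg : ∀ x, ‖g (r • x) - b • g x‖ ≤ ε) {x : X} {L : Y}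
    (hL : Tendsto (hyersUlamSeq r b g x) atTop (𝓝 L)) :
    ‖g x - L‖ ≤ ε / (b - 1) := by
  have h := dist_le_of_le_geometric_of_tendsto₀ _ _ (inv_lt_one_of_one_lt₀ hb)
    (dist_hyersUlamSeq_succ_le (by positivity) hg x) hL
  rw [hyersUlamSeq_zero, dist_eq_norm] at h
  calc ‖g x - L‖ ≤ ε / b / (1 - b⁻¹) := h
    _ = ε / (b - 1) := by field_simp

variable [CompleteSpace Y]

theorem exists_tendsto_hyersUlamSeq (hb : 1 < b) (hg : ∀ x, ‖g (r • x) - b • g x‖ ≤ ε)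
    (x : X) : ∃ L, Tendsto (hyersUlamSeq r b g x) atTop (𝓝 L) :=
  cauchySeq_tendsto_of_complete <| cauchySeq_of_le_geometric _ _ (inv_lt_one_of_one_lt₀ hb)
    (dist_hyersUlamSeq_succ_le (by positivity) hg x)

end HyersUlam

theorem stmt_13_general {X Y : Type*} [AddCommGroup X] [Module ℝ X]
    [NormedAddCommGroup Y] [NormedSpace ℝ Y] [CompleteSpace Y]
    (g : X → Y) (ε : ℝ)
    (hg : ∀ x : X, ‖g ((2:ℝ) • x) - (4:ℝ) • g x‖ ≤ ε) :
    ∃! Q : X → Y,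
      (∀ x : X, Q ((2:ℝ) • x) = (4:ℝ) • Q x) ∧
      (∀ x : X, ‖g x - Q x‖ ≤ ε / 3) ∧
      (∀ x : X, Filter.Tendsto (fun n : ℕ => ((4:ℝ)^n)⁻¹ • g (((2:ℝ)^n) • x))
        Filter.atTop (nhds (Q x))) := by
  have hb : (1 : ℝ) < 4 := by norm_num
  choose Q hQ using exists_tendsto_hyersUlamSeq hb hg
  refine ⟨Q, ⟨fun x => ?_, fun x => ?_, hQ⟩, fun Q' ⟨_, _, hQ'⟩ => ?_⟩
  · exact tendsto_nhds_unique (hQ _) (tendsto_hyersUlamSeq_smul (by norm_num) (hQ x))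
  · exact (norm_sub_le_of_tendsto_hyersUlamSeq hb hg (hQ x)).trans_eq (by norm_num)
  · funext x
    exact tendsto_nhds_unique (hQ' x) (hQ x)

theorem stmt_13 {X Y : Type*} [AddCommGroup X] [Module ℝ X]
    [NormedAddCommGroup Y] [NormedSpace ℝ Y] [CompleteSpace Y]
    (g : X → Y) (ε : ℝ) (hε : 0 ≤ ε)
    (hg : ∀ x : X, ‖g ((2:ℝ) • x) - (4:ℝ) • g x‖ ≤ ε) :
    ∃! Q : X → Y,
      (∀ x : X, Q ((2:ℝ) • x) = (4:ℝ) • Q x) ∧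
      (∀ x : X, ‖g x - Q x‖ ≤ ε / 3) ∧
      (∀ x : X, Filter.Tendsto (fun n : ℕ => ((4:ℝ)^n)⁻¹ • g (((2:ℝ)^n) • x))
        Filter.atTop (nhds (Q x))) :=
  stmt_13_general g ε hg
end

section
/- Let Y be a real Banach space, X a real vector space, and h : X → Y a map satisfying ‖h(2x) − 16h(x)‖ ≤ ε for all x ∈ X and some ε ≥ 0. Then there exists a unique map Q : X → Y with Q(2x) = 16Q(x) for all x and ‖h(x) − Q(x)‖ ≤ ε/15 for all x ∈ X; Q is given by Q(x) = lim_{n→∞} h(2ⁿx)/16ⁿ. -/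
/-! Hyers' direct method: the hypothesis says that `n ↦ 16⁻ⁿ h(2ⁿx)` moves by at most
`ε / 16ⁿ⁺¹` per step, so it is Cauchy with limit `Q x`; summing the geometric series gives
`‖h x - Q x‖ ≤ ε / 15`, and `Q (2x) = 16 Q x` holds along the sequence, hence in the limit. -/

open Filter Topology

section RescaledOrbit

variable {X 𝕜 Y : Type*} [NormedField 𝕜] [NormedAddCommGroup Y] [NormedSpace 𝕜 Y]
  (h : X → Y) (T : X → X) (c : 𝕜)

def rescaledOrbit (n : ℕ) (x : X) : Y := (c ^ n)⁻¹ • h (T^[n] x)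

@[simp]
lemma rescaledOrbit_zero (x : X) : rescaledOrbit h T c 0 x = h x := by
  simp [rescaledOrbit]

variable {h T c}

lemma rescaledOrbit_apply_map (hc : c ≠ 0) (n : ℕ) (x : X) :
    rescaledOrbit h T c n (T x) = c • rescaledOrbit h T c (n + 1) x := by
  rw [rescaledOrbit, rescaledOrbit, smul_smul, pow_succ, mul_inv, mul_left_comm,
    mul_inv_cancel₀ hc, mul_one, Function.iterate_succ_apply]

lemma dist_rescaledOrbit_succ_le {ε : ℝ} (hc : c ≠ 0) (hh : ∀ x, ‖h (T x) - c • h x‖ ≤ ε)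
    (n : ℕ) (x : X) :
    dist (rescaledOrbit h T c n x) (rescaledOrbit h T c (n + 1) x) ≤ ε / ‖c‖ * ‖c‖⁻¹ ^ n := by
  have hdiff : rescaledOrbit h T c n x - rescaledOrbit h T c (n + 1) x =
      (c ^ (n + 1))⁻¹ • (c • h (T^[n] x) - h (T (T^[n] x))) := by
    rw [rescaledOrbit, rescaledOrbit, Function.iterate_succ_apply', smul_sub, smul_smul,
      pow_succ, mul_inv, inv_mul_cancel_right₀ hc]
  rw [dist_eq_norm, hdiff, norm_smul, norm_sub_rev, norm_inv, norm_pow, pow_succ, mul_comm]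
  calc ‖h (T (T^[n] x)) - c • h (T^[n] x)‖ * (‖c‖ ^ n * ‖c‖)⁻¹
      ≤ ε * (‖c‖ ^ n * ‖c‖)⁻¹ := by gcongr; exact hh _
    _ = ε / ‖c‖ * ‖c‖⁻¹ ^ n := by rw [mul_inv, inv_pow]; ring

theorem exists_tendsto_rescaledOrbit [CompleteSpace Y] {ε : ℝ} (hc : 1 < ‖c‖)
    (hh : ∀ x, ‖h (T x) - c • h x‖ ≤ ε) :
    ∃ Q : X → Y, (∀ x, Q (T x) = c • Q x) ∧ (∀ x, ‖h x - Q x‖ ≤ ε / (‖c‖ - 1)) ∧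
      ∀ x, Tendsto (fun n ↦ rescaledOrbit h T c n x) atTop (𝓝 (Q x)) := by
  have hc₀ : c ≠ 0 := norm_pos_iff.mp (one_pos.trans hc)
  have hr : ‖c‖⁻¹ < 1 := inv_lt_one_of_one_lt₀ hc
  have hstep := dist_rescaledOrbit_succ_le hc₀ hh
  choose Q hQ using fun x ↦ cauchySeq_tendsto_of_complete
    (cauchySeq_of_le_geometric _ _ hr (hstep · x))
  refine ⟨Q, fun x ↦ ?_, fun x ↦ ?_, hQ⟩
  · have hshift : Tendsto (fun n ↦ c • rescaledOrbit h T c (n + 1) x) atTop (𝓝 (c • Q x)) :=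
      ((hQ x).comp (tendsto_add_atTop_nat 1)).const_smul c
    simp only [← rescaledOrbit_apply_map hc₀] at hshift
    exact tendsto_nhds_unique (hQ (T x)) hshift
  · have hdist := dist_le_of_le_geometric_of_tendsto₀ _ _ hr (hstep · x) (hQ x)
    rwa [rescaledOrbit_zero, dist_eq_norm, div_div, mul_sub, mul_one,
      mul_inv_cancel₀ (by positivity)] at hdist

end RescaledOrbit

theorem stmt_14_general {X Y : Type*} [AddCommGroup X] [Module ℝ X]
    [NormedAddCommGroup Y] [NormedSpace ℝ Y] [CompleteSpace Y]
    (h : X → Y) (ε : ℝ)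
    (hh : ∀ x : X, ‖h ((2:ℝ) • x) - (16:ℝ) • h x‖ ≤ ε) :
    ∃! Q : X → Y,
      (∀ x : X, Q ((2:ℝ) • x) = (16:ℝ) • Q x) ∧
      (∀ x : X, ‖h x - Q x‖ ≤ ε / 15) ∧
      (∀ x : X, Filter.Tendsto (fun n : ℕ => ((16:ℝ)^n)⁻¹ • h (((2:ℝ)^n) • x))
        Filter.atTop (nhds (Q x))) := by
  obtain ⟨Q, hQ_map, hQ_near, hQ_lim⟩ :=
    exists_tendsto_rescaledOrbit (T := ((2:ℝ) • ·)) (c := (16:ℝ)) (by norm_num) hh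
  simp only [rescaledOrbit, smul_iterate_apply] at hQ_lim
  refine ⟨Q, ⟨hQ_map, fun x ↦ by simpa [show (16:ℝ) - 1 = 15 by norm_num] using hQ_near x,
    hQ_lim⟩, fun Q' ⟨_, _, hQ'_lim⟩ ↦ funext fun x ↦ tendsto_nhds_unique (hQ'_lim x) (hQ_lim x)⟩

theorem stmt_14 {X Y : Type*} [AddCommGroup X] [Module ℝ X]
    [NormedAddCommGroup Y] [NormedSpace ℝ Y] [CompleteSpace Y]
    (h : X → Y) (ε : ℝ) (hε : 0 ≤ ε)
    (hh : ∀ x : X, ‖h ((2:ℝ) • x) - (16:ℝ) • h x‖ ≤ ε) :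
    ∃! Q : X → Y,
      (∀ x : X, Q ((2:ℝ) • x) = (16:ℝ) • Q x) ∧
      (∀ x : X, ‖h x - Q x‖ ≤ ε / 15) ∧
      (∀ x : X, Filter.Tendsto (fun n : ℕ => ((16:ℝ)^n)⁻¹ • h (((2:ℝ)^n) • x))
        Filter.atTop (nhds (Q x))) :=
  stmt_14_general h ε hh
end

section
/- Let X be a real vector space, Y a real Banach space, and f : X → Y with f(0) = 0 such that ‖f(2x+y) + f(2x−y) − 4f(x+y) − 4f(x−y) − 2f(2x) + 8f(x) + 6f(y)‖ ≤ δ for all x, y ∈ X. Then there exist functions Q₁, Q₂ : X → Y with Q₁(2x) = 4Q₁(x), Q₂(2x) = 16Q₂(x) for all x, and a constant C (depending only on δ) such that ‖f(x) − Q₁(x) − Q₂(x)‖ ≤ C for all x ∈ X. -/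
/-!
Three instances of the functional inequality (at `(x, 2x)`, `(x, x)` and `(0, x)`) combine into
`‖f (4x) - 20 f (2x) + 64 f x‖ ≤ 19δ/3`. The operator `f (4x) - 20 f (2x) + 64 f x` factors as
`(E - 4)(E - 16)` in the dilation `E f = f (2 ·)`, so `g = f (2 ·) - 16 f` is almost `4`-homogeneous
and `h = f (2 ·) - 4 f` is almost `16`-homogeneous. Hyers' direct method, `Q x = lim a⁻ⁿ g (2ⁿ x)`,
turns each into an exactly homogeneous map nearby, and `f = (h - g) / 12` recombines them.
-/

open Filter Topology

section Hyers

variable {α E : Type*} [NormedAddCommGroup E] [NormedSpace ℝ E] {φ : α → α} {g : α → E} {a K : ℝ}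

noncomputable def hyersSeq (φ : α → α) (a : ℝ) (g : α → E) (x : α) (n : ℕ) : E :=
  (a ^ n)⁻¹ • g (φ^[n] x)

lemma hyersSeq_zero (x : α) : hyersSeq φ a g x 0 = g x := by
  simp [hyersSeq]

lemma hyersSeq_apply_map (ha : a ≠ 0) (x : α) (n : ℕ) :
    hyersSeq φ a g (φ x) n = a • hyersSeq φ a g x (n + 1) := by
  simp only [hyersSeq, smul_smul, Function.iterate_succ_apply]
  congr 1
  rw [pow_succ]; field_simp

lemma dist_hyersSeq_succ_le (ha : 0 < a) (hg : ∀ x, ‖g (φ x) - a • g x‖ ≤ K) (x : α) (n : ℕ) :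
    dist (hyersSeq φ a g x n) (hyersSeq φ a g x (n + 1)) ≤ K / a * a⁻¹ ^ n := by
  have hdiff : hyersSeq φ a g x n - hyersSeq φ a g x (n + 1)
      = -((a ^ (n + 1))⁻¹ • (g (φ (φ^[n] x)) - a • g (φ^[n] x))) := by
    simp only [hyersSeq, Function.iterate_succ_apply', smul_sub, smul_smul]
    rw [pow_succ]; match_scalars <;> field_simp
  calc dist (hyersSeq φ a g x n) (hyersSeq φ a g x (n + 1))
      = (a ^ (n + 1))⁻¹ * ‖g (φ (φ^[n] x)) - a • g (φ^[n] x)‖ := by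
        rw [dist_eq_norm, hdiff, norm_neg, norm_smul, Real.norm_of_nonneg (by positivity)]
    _ ≤ (a ^ (n + 1))⁻¹ * K := by gcongr; exact hg _
    _ = K / a * a⁻¹ ^ n := by rw [pow_succ, mul_inv, inv_pow]; ring

theorem exists_map_eq_smul_near_of_norm_sub_le [CompleteSpace E] (ha : 1 < a)
    (hg : ∀ x, ‖g (φ x) - a • g x‖ ≤ K) :
    ∃ Q : α → E, (∀ x, Q (φ x) = a • Q x) ∧ ∀ x, ‖g x - Q x‖ ≤ K / (a - 1) := by
  have ha₀ : 0 < a := one_pos.trans ha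
  have hr : a⁻¹ < 1 := inv_lt_one_of_one_lt₀ ha
  have hdist := dist_hyersSeq_succ_le ha₀ hg
  have hlim : ∀ x, ∃ q, Tendsto (hyersSeq φ a g x) atTop (𝓝 q) := fun x =>
    cauchySeq_tendsto_of_complete (cauchySeq_of_le_geometric _ _ hr (hdist x))
  choose Q hQ using hlim
  refine ⟨Q, fun x => ?_, fun x => ?_⟩
  · have hshift : Tendsto (hyersSeq φ a g (φ x)) atTop (𝓝 (a • Q x)) := by
      simp_rw [funext (hyersSeq_apply_map ha₀.ne' x)]
      exact ((hQ x).comp (tendsto_add_atTop_nat 1)).const_smul a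
    exact tendsto_nhds_unique (hQ (φ x)) hshift
  · have hbound := dist_le_of_le_geometric_of_tendsto₀ _ _ hr (hdist x) (hQ x)
    rwa [hyersSeq_zero, dist_eq_norm, div_div, mul_sub, mul_one, mul_inv_cancel₀ ha₀.ne']
      at hbound

end Hyers

section QuadraticQuartic

variable {X Y : Type*} [AddCommGroup X] [Module ℝ X]

def quadQuarticDefect [AddCommGroup Y] [Module ℝ Y] (f : X → Y) (x y : X) : Y :=
  f ((2:ℝ) • x + y) + f ((2:ℝ) • x - y) - (4:ℝ) • f (x + y)
    - (4:ℝ) • f (x - y) - (2:ℝ) • f ((2:ℝ) • x) + (8:ℝ) • f x + (6:ℝ) • f y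

lemma quadQuarticDefect_combination [AddCommGroup Y] [Module ℝ Y] {f : X → Y} (hf₀ : f 0 = 0)
    (x : X) :
    f ((4:ℝ) • x) - (20:ℝ) • f ((2:ℝ) • x) + (64:ℝ) • f x
      = quadQuarticDefect f x ((2:ℝ) • x) + (4:ℝ) • quadQuarticDefect f x x
        - (4 / 3 : ℝ) • quadQuarticDefect f 0 x := by
  simp only [quadQuarticDefect]
  rw [show (2:ℝ) • x + (2:ℝ) • x = (4:ℝ) • x by module, show (2:ℝ) • x - (2:ℝ) • x = 0 by module,
    show x + (2:ℝ) • x = (3:ℝ) • x by module, show x - (2:ℝ) • x = -x by module,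
    show (2:ℝ) • x + x = (3:ℝ) • x by module, show (2:ℝ) • x - x = x by module,
    show x + x = (2:ℝ) • x by module, sub_self, smul_zero, zero_add, zero_sub, hf₀]
  module

lemma norm_dilation_combination_le [NormedAddCommGroup Y] [NormedSpace ℝ Y] {f : X → Y} {δ : ℝ}
    (hf₀ : f 0 = 0) (hf : ∀ x y, ‖quadQuarticDefect f x y‖ ≤ δ) (x : X) :
    ‖f ((4:ℝ) • x) - (20:ℝ) • f ((2:ℝ) • x) + (64:ℝ) • f x‖ ≤ 19 / 3 * δ := by
  rw [quadQuarticDefect_combination hf₀]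
  calc _ ≤ ‖quadQuarticDefect f x ((2:ℝ) • x)‖ + 4 * ‖quadQuarticDefect f x x‖
        + 4 / 3 * ‖quadQuarticDefect f 0 x‖ := by
        refine (norm_sub_le _ _).trans (add_le_add ((norm_add_le _ _).trans ?_) ?_) <;>
          simp [norm_smul]
    _ ≤ δ + 4 * δ + 4 / 3 * δ := by gcongr <;> apply hf
    _ = 19 / 3 * δ := by ring

end QuadraticQuartic

theorem stmt_19_general {X Y : Type*} [AddCommGroup X] [Module ℝ X]
    [NormedAddCommGroup Y] [NormedSpace ℝ Y] [CompleteSpace Y]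
    (δ : ℝ) :
    ∃ C : ℝ, ∀ f : X → Y, f 0 = 0 →
      (∀ x y : X, ‖f ((2:ℝ) • x + y) + f ((2:ℝ) • x - y) - (4:ℝ) • f (x + y)
        - (4:ℝ) • f (x - y) - (2:ℝ) • f ((2:ℝ) • x) + (8:ℝ) • f x + (6:ℝ) • f y‖ ≤ δ) →
      ∃ Q₁ Q₂ : X → Y,
        (∀ x : X, Q₁ ((2:ℝ) • x) = (4:ℝ) • Q₁ x) ∧
        (∀ x : X, Q₂ ((2:ℝ) • x) = (16:ℝ) • Q₂ x) ∧
        (∀ x : X, ‖f x - Q₁ x - Q₂ x‖ ≤ C) := by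
  refine ⟨19 / 90 * δ, fun f hf₀ hf => ?_⟩
  have key := norm_dilation_combination_le hf₀ hf
  set g : X → Y := fun x => f ((2:ℝ) • x) - (16:ℝ) • f x
  set h : X → Y := fun x => f ((2:ℝ) • x) - (4:ℝ) • f x
  have hdil : ∀ x : X, (2:ℝ) • (2:ℝ) • x = (4:ℝ) • x := fun x => by module
  obtain ⟨G, hG, hgG⟩ := exists_map_eq_smul_near_of_norm_sub_le (φ := ((2:ℝ) • ·)) (g := g)
    (by norm_num : (1:ℝ) < 4) fun x => by convert key x using 2; simp only [g, hdil]; module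
  obtain ⟨H, hH, hhH⟩ := exists_map_eq_smul_near_of_norm_sub_le (φ := ((2:ℝ) • ·)) (g := h)
    (by norm_num : (1:ℝ) < 16) fun x => by convert key x using 2; simp only [h, hdil]; module
  refine ⟨fun x => -(12:ℝ)⁻¹ • G x, fun x => (12:ℝ)⁻¹ • H x,
    fun x => by simp only [hG, smul_comm _ (4:ℝ)], fun x => by simp only [hH, smul_comm _ (16:ℝ)],
    fun x => ?_⟩
  calc ‖f x - -(12:ℝ)⁻¹ • G x - (12:ℝ)⁻¹ • H x‖
      = 12⁻¹ * ‖(h x - H x) - (g x - G x)‖ := by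
        rw [← norm_smul_of_nonneg (by norm_num)]; congr 1; simp only [g, h]; module
    _ ≤ 12⁻¹ * (19 / 3 * δ / (16 - 1) + 19 / 3 * δ / (4 - 1)) := by
        gcongr; exact (norm_sub_le _ _).trans (add_le_add (hhH x) (hgG x))
    _ = 19 / 90 * δ := by ring

theorem stmt_19 {X Y : Type*} [AddCommGroup X] [Module ℝ X]
    [NormedAddCommGroup Y] [NormedSpace ℝ Y] [CompleteSpace Y]
    (δ : ℝ) (hδ : 0 ≤ δ) :
    ∃ C : ℝ, ∀ f : X → Y, f 0 = 0 →
      (∀ x y : X, ‖f ((2:ℝ) • x + y) + f ((2:ℝ) • x - y) - (4:ℝ) • f (x + y)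
        - (4:ℝ) • f (x - y) - (2:ℝ) • f ((2:ℝ) • x) + (8:ℝ) • f x + (6:ℝ) • f y‖ ≤ δ) →
      ∃ Q₁ Q₂ : X → Y,
        (∀ x : X, Q₁ ((2:ℝ) • x) = (4:ℝ) • Q₁ x) ∧
        (∀ x : X, Q₂ ((2:ℝ) • x) = (16:ℝ) • Q₂ x) ∧
        (∀ x : X, ‖f x - Q₁ x - Q₂ x‖ ≤ C) :=
  stmt_19_general δ
end
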